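/- Let η_{m,0} be the unique (up to phase) unit-normalization-compatible vector in the zero-weight space of π_m = π_{(m,0,-m)} annihilated by π_m(X₂*), expanded in the Gelfand-Tsetlin basis as η_{m,0} = Σ_{j=0}^m c_{m,j} ξ_{m,j}. Suppose π_m(X₂*)ξ_{m,j} = (j/(2j+1)) ξ'_{m,j} + ((j+1)/(2j+1)) ξ'_{m,j+1}. Then the coefficients satisfy c_{m,j} = (-1)^j (2j+1) c_{m,0}, and if ‖η_{m,0}‖² = m!²(2m+1)! then |c_{m,0}| = 1/(m+1). -/

import Mathlib

/-!
Applying `X₂*` to `η` and collecting terms, the coefficient of `ξ'_{k+1}` is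
`(k+1) (c_{k+1}/(2k+3) + c_k/(2k+1))`, so linear independence of the `ξ'` forces `c_k/(2k+1)`
to alternate in sign. Orthogonality then gives
`‖η‖² = |c₀|² m!²(2m+1)! ∑_{j ≤ m} (2j+1) = |c₀|² m!²(2m+1)! (m+1)²`.
-/

open Finset

section Reindexing

variable {R M : Type*}

lemma sum_range_smul_add_smul_succ [Semiring R] [AddCommMonoid M] [Module R M]
    (m : ℕ) (a b : ℕ → R) (v : ℕ → M) (ha : a 0 = 0) (hv : v (m + 1) = 0) :
    ∑ j ∈ range (m + 1), (a j • v j + b j • v (j + 1))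
      = ∑ k ∈ range m, (a (k + 1) + b k) • v (k + 1) := by
  rw [sum_add_distrib, sum_range_succ' (fun j => a j • v j),
    sum_range_succ (fun j => b j • v (j + 1)),
    ha, hv, zero_smul, smul_zero, add_zero, add_zero, ← sum_add_distrib]
  simp only [add_smul]

lemma LinearIndependent.coeff_eq_zero_of_sum_range_smul_succ [Ring R] [AddCommGroup M]
    [Module R M] {m : ℕ} {v : ℕ → M} (hv : LinearIndependent R (fun j : Fin m => v (j + 1)))
    {d : ℕ → R} (h : ∑ k ∈ range m, d k • v (k + 1) = 0) {k : ℕ} (hk : k < m) :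
    d k = 0 := by
  rw [← Fin.sum_univ_eq_sum_range (fun k => d k • v (k + 1))] at h
  exact Fintype.linearIndependent_iff.mp hv (fun k => d k) h ⟨k, hk⟩

end Reindexing

lemma eq_neg_one_pow_mul_of_succ_eq_neg {R : Type*} [Ring R] {m : ℕ} {d : ℕ → R}
    (h : ∀ k < m, d (k + 1) = -d k) {j : ℕ} (hj : j ≤ m) : d j = (-1) ^ j * d 0 := by
  induction j with
  | zero => simp
  | succ k ih => rw [h k hj, ih (by omega), pow_succ]; noncomm_ring

lemma eq_neg_one_pow_mul_odd_of_recurrence {K : Type*} [Field K] [CharZero K] {m : ℕ}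
    {c : ℕ → K}
    (h : ∀ k < m, c (k + 1) * (((k + 1 : ℕ) : K) / (2 * ((k + 1 : ℕ) : K) + 1))
      + c k * (((k : K) + 1) / (2 * (k : K) + 1)) = 0)
    {j : ℕ} (hj : j ≤ m) : c j = (-1) ^ j * (2 * (j : K) + 1) * c 0 := by
  have hodd (k : ℕ) : (2 * (k : K) + 1) ≠ 0 := by exact_mod_cast (by omega : 2 * k + 1 ≠ 0)
  have halt : ∀ k < m,
      c (k + 1) / (2 * ((k + 1 : ℕ) : K) + 1) = -(c k / (2 * (k : K) + 1)) := by
    intro k hk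
    have hk1 : ((k : K) + 1) ≠ 0 := by exact_mod_cast k.succ_ne_zero
    have := h k hk
    push_cast at this ⊢
    apply mul_left_cancel₀ hk1
    linear_combination this
  have := eq_neg_one_pow_mul_of_succ_eq_neg (d := fun k => c k / (2 * (k : K) + 1)) halt hj
  rw [div_eq_iff (hodd j)] at this
  simpa [mul_comm, mul_left_comm, mul_assoc] using this

section Pythagoras

variable {𝕜 E ι : Type*} [RCLike 𝕜] [NormedAddCommGroup E] [InnerProductSpace 𝕜 E]

lemma norm_sum_sq_eq_sum_norm_sq_of_pairwise_inner_eq_zero (s : Finset ι) (w : ι → E)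
    (h : (s : Set ι).Pairwise fun i j => inner 𝕜 (w i) (w j) = 0) :
    ‖∑ i ∈ s, w i‖ ^ 2 = ∑ i ∈ s, ‖w i‖ ^ 2 := by
  classical
  induction s using Finset.induction_on with
  | empty => simp
  | insert a s ha ih =>
    have horth : inner 𝕜 (w a) (∑ i ∈ s, w i) = 0 := by
      rw [inner_sum]
      refine sum_eq_zero fun i hi => h (by simp) (by simp [hi]) ?_
      rintro rfl; exact ha hi
    rw [sum_insert ha, sum_insert ha, sq,
      norm_add_sq_eq_norm_sq_add_norm_sq_of_inner_eq_zero _ _ horth,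
      ← sq, ← sq, ih (h.mono (by simp))]

end Pythagoras

lemma sum_range_two_mul_add_one (n : ℕ) :
    ∑ j ∈ range n, (2 * (j : ℝ) + 1) = (n : ℝ) ^ 2 := by
  induction n with
  | zero => simp
  | succ k ih => rw [sum_range_succ, ih]; push_cast; ring

lemma norm_sq_sum_smul_eq_of_orthogonal {𝕜 E : Type*} [RCLike 𝕜] [NormedAddCommGroup E]
    [InnerProductSpace 𝕜 E] (m : ℕ) (ξ : ℕ → E) (c : ℕ → 𝕜) (M : ℝ)
    (horth : ∀ i j : ℕ, i ≤ m → j ≤ m → i ≠ j → inner 𝕜 (ξ i) (ξ j) = 0)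
    (hnorm : ∀ j : ℕ, j ≤ m → ‖ξ j‖ ^ 2 = M / (2 * (j : ℝ) + 1))
    (hc : ∀ j : ℕ, j ≤ m → c j = (-1) ^ j * (2 * (j : 𝕜) + 1) * c 0) :
    ‖∑ j ∈ range (m + 1), c j • ξ j‖ ^ 2 = ‖c 0‖ ^ 2 * M * ((m : ℝ) + 1) ^ 2 := by
  have hle {j : ℕ} (hj : j ∈ range (m + 1)) : j ≤ m := Nat.lt_succ_iff.mp (mem_range.mp hj)
  have hpair :
      (range (m + 1) : Set ℕ).Pairwise fun i j => inner 𝕜 (c i • ξ i) (c j • ξ j) = 0 := by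
    intro i hi j hj hij
    rw [inner_smul_left, inner_smul_right, horth i j (hle hi) (hle hj) hij, mul_zero, mul_zero]
  have hterm :
      ∀ j ∈ range (m + 1), ‖c j • ξ j‖ ^ 2 = ‖c 0‖ ^ 2 * M * (2 * (j : ℝ) + 1) := by
    intro j hj
    have hodd : (2 * (j : 𝕜) + 1) = ((2 * j + 1 : ℕ) : 𝕜) := by push_cast; ring
    have hpos : (0 : ℝ) < 2 * j + 1 := by positivity
    rw [norm_smul, mul_pow, hnorm j (hle hj), hc j (hle hj), hodd, norm_mul, norm_mul, norm_pow,
      norm_neg, norm_one, one_pow, one_mul, RCLike.norm_natCast]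
    push_cast
    field_simp
  rw [norm_sum_sq_eq_sum_norm_sq_of_pairwise_inner_eq_zero _ _ hpair, sum_congr rfl hterm,
    ← mul_sum, sum_range_two_mul_add_one]
  push_cast
  ring

theorem stmt16_general {V : Type*} [NormedAddCommGroup V] [InnerProductSpace ℂ V]
    (m : ℕ) (ξ ξ' : ℕ → V) (η : V) (c : ℕ → ℂ) (X2star : V →ₗ[ℂ] V)
    (hη : η = ∑ j ∈ Finset.range (m + 1), c j • ξ j)
    (hX2star : ∀ j : ℕ, j ≤ m →
      X2star (ξ j) = ((j : ℂ) / (2 * (j : ℂ) + 1)) • ξ' j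
        + (((j : ℂ) + 1) / (2 * (j : ℂ) + 1)) • ξ' (j + 1))
    (hξ'top : ξ' (m + 1) = 0)
    (hindep : LinearIndependent ℂ (fun j : Fin m => ξ' ((j : ℕ) + 1)))
    (hann : X2star η = 0)
    (horth : ∀ i j : ℕ, i ≤ m → j ≤ m → i ≠ j → (inner ℂ (ξ i) (ξ j) : ℂ) = 0)
    (hnorm : ∀ j : ℕ, j ≤ m →
      ‖ξ j‖ ^ 2 = (Nat.factorial m : ℝ) ^ 2 * (Nat.factorial (2 * m + 1) : ℝ)
        / (2 * (j : ℝ) + 1))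
    (hηnorm : ‖η‖ ^ 2 = (Nat.factorial m : ℝ) ^ 2 * (Nat.factorial (2 * m + 1) : ℝ)) :
    (∀ j : ℕ, j ≤ m → c j = (-1 : ℂ) ^ j * (2 * (j : ℂ) + 1) * c 0) ∧
    ‖c 0‖ = 1 / ((m : ℝ) + 1) := by
  have hrec : ∀ k < m, c (k + 1) * (((k + 1 : ℕ) : ℂ) / (2 * ((k + 1 : ℕ) : ℂ) + 1))
      + c k * (((k : ℂ) + 1) / (2 * (k : ℂ) + 1)) = 0 := by
    set a : ℕ → ℂ := fun j => c j * ((j : ℂ) / (2 * (j : ℂ) + 1))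
    set b : ℕ → ℂ := fun j => c j * (((j : ℂ) + 1) / (2 * (j : ℂ) + 1))
    refine fun k hk =>
      hindep.coeff_eq_zero_of_sum_range_smul_succ (d := fun k => a (k + 1) + b k) ?_ hk
    rw [← sum_range_smul_add_smul_succ m a b ξ' (by simp [a]) hξ'top, ← hann, hη, map_sum]
    refine sum_congr rfl fun j hj => ?_
    rw [map_smul, hX2star j (Nat.lt_succ_iff.mp (mem_range.mp hj)), smul_add, smul_smul, smul_smul]
  have hc := fun j (hj : j ≤ m) => eq_neg_one_pow_mul_odd_of_recurrence hrec hj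
  refine ⟨hc, ?_⟩
  rw [hη, norm_sq_sum_smul_eq_of_orthogonal m ξ c _ horth hnorm hc] at hηnorm
  have hM : (0 : ℝ) < (Nat.factorial m : ℝ) ^ 2 * (Nat.factorial (2 * m + 1) : ℝ) := by
    positivity
  have hsq : (‖c 0‖ * ((m : ℝ) + 1)) ^ 2 = 1 := by
    apply mul_right_cancel₀ hM.ne'
    linear_combination hηnorm
  exact eq_one_div_of_mul_eq_one_left
    ((pow_eq_one_iff_of_nonneg (by positivity) two_ne_zero).mp hsq)

/-- Let `η_{m,0} = Σ_{j=0}^m c_{m,j} ξ_{m,j}` be a zero-weight vector of `π_{(m,0,-m)}`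
annihilated by `π_m(X₂*)`, where
`π_m(X₂*)ξ_{m,j} = (j/(2j+1)) ξ'_{m,j} + ((j+1)/(2j+1)) ξ'_{m,j+1}` (with `ξ'_{m,0}`-term
vanishing and `ξ'_{m,m+1} = 0`), the `ξ_{m,j}` are mutually orthogonal with
`‖ξ_{m,j}‖² = m!²(2m+1)!/(2j+1)`, and the `ξ'_{m,j}` (`j = 1,…,m`) are linearly independent.
Then `c_{m,j} = (-1)^j (2j+1) c_{m,0}`, and if `‖η_{m,0}‖² = m!²(2m+1)!` then
`|c_{m,0}| = 1/(m+1)`. -/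
theorem stmt16 {V : Type*} [NormedAddCommGroup V] [InnerProductSpace ℂ V]
    (m : ℕ) (ξ ξ' : ℕ → V) (η : V) (c : ℕ → ℂ) (X2star : V →ₗ[ℂ] V)
    (hη : η = ∑ j ∈ Finset.range (m + 1), c j • ξ j)
    (hX2star : ∀ j : ℕ, j ≤ m →
      X2star (ξ j) = ((j : ℂ) / (2 * (j : ℂ) + 1)) • ξ' j
        + (((j : ℂ) + 1) / (2 * (j : ℂ) + 1)) • ξ' (j + 1))
    (hξ'0 : ξ' 0 = 0) (hξ'top : ξ' (m + 1) = 0)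
    (hindep : LinearIndependent ℂ (fun j : Fin m => ξ' ((j : ℕ) + 1)))
    (hann : X2star η = 0)
    (horth : ∀ i j : ℕ, i ≤ m → j ≤ m → i ≠ j → (inner ℂ (ξ i) (ξ j) : ℂ) = 0)
    (hnorm : ∀ j : ℕ, j ≤ m →
      ‖ξ j‖ ^ 2 = (Nat.factorial m : ℝ) ^ 2 * (Nat.factorial (2 * m + 1) : ℝ)
        / (2 * (j : ℝ) + 1))
    (hηnorm : ‖η‖ ^ 2 = (Nat.factorial m : ℝ) ^ 2 * (Nat.factorial (2 * m + 1) : ℝ)) :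
    (∀ j : ℕ, j ≤ m → c j = (-1 : ℂ) ^ j * (2 * (j : ℂ) + 1) * c 0) ∧
    ‖c 0‖ = 1 / ((m : ℝ) + 1) :=
  stmt16_general m ξ ξ' η c X2star hη hX2star hξ'top hindep hann horth hnorm hηnorm
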